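/- arXiv:math-ph/0509071 — 3 statements merged into one kernel-verified Lean document; each statement's English description precedes it below -/
import Mathlib

section
/- Suppose bounded operators A_1, A_2, … on L²(R;λ) converge strongly to a bounded operator A, each A_n has an integral kernel A_n(x,y) (i.e. (A_n φ)(x) = ∫ A_n(x,y) φ(y) λ(dy) a.e. for all φ ∈ L²(R;λ)), and 0 ≤ A_n(x,y) with A_n(x,y) increasing in n and converging to a function A(x,y) for λ⊗λ-a.e. (x,y) ∈ R². Then A has A(x,y) as its integral kernel. -/
open MeasureTheory Filter
open scoped ENNReal NNReal Topology

noncomputable section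

variable {R : Type*} [TopologicalSpace R] [T2Space R] [LocallyCompactSpace R]
  [SecondCountableTopology R] [MeasurableSpace R] [BorelSpace R]

/-- `A` has integral kernel `k` on `L²(R;λ)`:
`(Aφ)(x) = ∫ k(x,y) φ(y) λ(dy)` for a.e. `x`, for every `φ ∈ L²(R;λ)`. -/
def IsKernelOf {R : Type*} [MeasurableSpace R] (lam : Measure R)
    (A : Lp ℝ 2 lam →L[ℝ] Lp ℝ 2 lam) (k : R → R → ℝ) : Prop :=
  ∀ φ : Lp ℝ 2 lam, ∀ᵐ x ∂lam, (A φ : R → ℝ) x = ∫ y, k x y * (φ : R → ℝ) y ∂lam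

section Aux

variable {α : Type*} [MeasurableSpace α] {μ : Measure α}

private lemma ofReal_mul_max {G t : ℝ} (hG : 0 ≤ G) :
    ENNReal.ofReal (G * t) = ENNReal.ofReal (G * max t 0) := by
  rcases le_total t 0 with h | h
  · rw [max_eq_right h, mul_zero, ENNReal.ofReal_zero,
      ENNReal.ofReal_of_nonpos (mul_nonpos_of_nonneg_of_nonpos hG h)]
  · rw [max_eq_left h]

private lemma not_integrable_aux {G f : α → ℝ} (hG : ∀ᵐ y ∂μ, 0 ≤ G y)
    (htop : ∫⁻ y, ENNReal.ofReal (G y * max (f y) 0) ∂μ = ∞) :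
    ¬ Integrable (fun y => G y * f y) μ := by
  intro hint
  have h1 : Integrable (fun y => G y * max (f y) 0) μ := by
    refine hint.pos_part.congr ?_
    filter_upwards [hG] with y hy
    rw [mul_max_of_nonneg _ _ hy, mul_zero]
  have h2 : ∫⁻ y, ENNReal.ofReal (G y * max (f y) 0) ∂μ < ∞ :=
    lt_of_le_of_lt (lintegral_mono fun y => Real.ofReal_le_enorm _) h1.hasFiniteIntegral
  exact absurd htop h2.ne

private lemma not_integrable_aux' {G f : α → ℝ} (hG : ∀ᵐ y ∂μ, 0 ≤ G y)
    (htop : ∫⁻ y, ENNReal.ofReal (G y * max (-f y) 0) ∂μ = ∞) :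
    ¬ Integrable (fun y => G y * f y) μ := by
  intro hint
  have h1 : Integrable (fun y => G y * (-f y)) μ :=
    hint.neg.congr (Filter.EventuallyEq.of_eq (funext fun y => (mul_neg _ _).symm))
  exact not_integrable_aux (f := fun y => -f y) hG htop h1

private lemma integral_eq_aux {G f : α → ℝ} (hGm : AEMeasurable G μ) (hf : AEMeasurable f μ)
    (hG : ∀ᵐ y ∂μ, 0 ≤ G y)
    (hp : ∫⁻ y, ENNReal.ofReal (G y * max (f y) 0) ∂μ ≠ ∞)
    (hn : ∫⁻ y, ENNReal.ofReal (G y * max (-f y) 0) ∂μ ≠ ∞) :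
    ∫ y, G y * f y ∂μ =
      (∫⁻ y, ENNReal.ofReal (G y * max (f y) 0) ∂μ).toReal -
      (∫⁻ y, ENNReal.ofReal (G y * max (-f y) 0) ∂μ).toReal := by
  have key1 : (fun y => ENNReal.ofReal (G y * f y)) =ᵐ[μ]
      fun y => ENNReal.ofReal (G y * max (f y) 0) :=
    hG.mono fun y hy => ofReal_mul_max hy
  have key2 : (fun y => ENNReal.ofReal (-(G y * f y))) =ᵐ[μ]
      fun y => ENNReal.ofReal (G y * max (-f y) 0) :=
    hG.mono fun y hy => by
      show ENNReal.ofReal (-(G y * f y)) = ENNReal.ofReal (G y * max (-f y) 0)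
      rw [← mul_neg]; exact ofReal_mul_max hy
  have habs : (fun y => ENNReal.ofReal ‖G y * f y‖) =ᵐ[μ]
      fun y => ENNReal.ofReal (G y * max (f y) 0) + ENNReal.ofReal (G y * max (-f y) 0) := by
    filter_upwards [hG] with y hy
    rcases le_total 0 (f y) with h | h
    · rw [max_eq_right (neg_nonpos.2 h), mul_zero, ENNReal.ofReal_zero, add_zero,
        max_eq_left h, Real.norm_eq_abs, abs_of_nonneg (mul_nonneg hy h)]
    · rw [max_eq_right h, mul_zero, ENNReal.ofReal_zero, zero_add,
        max_eq_left (neg_nonneg.2 h), Real.norm_eq_abs,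
        abs_of_nonpos (mul_nonpos_of_nonneg_of_nonpos hy h), mul_neg]
  have hint : Integrable (fun y => G y * f y) μ := by
    refine ⟨(hGm.mul hf).aestronglyMeasurable, ?_⟩
    rw [hasFiniteIntegral_iff_norm]
    calc ∫⁻ y, ENNReal.ofReal ‖G y * f y‖ ∂μ
        = ∫⁻ y, (ENNReal.ofReal (G y * max (f y) 0)
            + ENNReal.ofReal (G y * max (-f y) 0)) ∂μ := lintegral_congr_ae habs
      _ = (∫⁻ y, ENNReal.ofReal (G y * max (f y) 0) ∂μ)
            + ∫⁻ y, ENNReal.ofReal (G y * max (-f y) 0) ∂μ :=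
        lintegral_add_left' (ENNReal.measurable_ofReal.comp_aemeasurable
          ((hGm.mul (hf.max aemeasurable_const)))) _
      _ < ∞ := ENNReal.add_lt_top.2 ⟨hp.lt_top, hn.lt_top⟩
  rw [integral_eq_lintegral_pos_part_sub_lintegral_neg_part hint,
    lintegral_congr_ae key1, lintegral_congr_ae key2]

private lemma exists_top_aux {g : ℕ → α → ℝ} {c : α → ℝ}
    (hgm : ∀ n, AEMeasurable (g n) μ) (hc : AEMeasurable c μ)
    (hae : ∀ᵐ y ∂μ, (∀ n, 0 ≤ g n y) ∧ (∀ n, g n y ≤ g (n + 1) y) ∧ 0 ≤ c y)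
    {ns : ℕ → ℕ} (hns : StrictMono ns) {π : ℝ}
    (hπ : Tendsto (fun m => ∫ y, g (ns m) y * c y ∂μ) atTop (𝓝 π))
    (htop : (⨆ n, ∫⁻ y, ENNReal.ofReal (g n y * c y) ∂μ) = ∞) :
    ∃ n₀, ∫⁻ y, ENNReal.ofReal (g n₀ y * c y) ∂μ = ∞ := by
  by_contra hfin
  push_neg at hfin
  set P : ℕ → ℝ≥0∞ := fun n => ∫⁻ y, ENNReal.ofReal (g n y * c y) ∂μ with hPdef
  have hPmono : Monotone P := monotone_nat_of_le_succ fun n =>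
    lintegral_mono_ae (hae.mono fun y hy =>
      ENNReal.ofReal_le_ofReal (mul_le_mul_of_nonneg_right (hy.2.1 n) hy.2.2))
  have heq : ∀ n, ∫ y, g n y * c y ∂μ = (P n).toReal := fun n =>
    integral_eq_lintegral_of_nonneg_ae
      (hae.mono fun y hy => mul_nonneg (hy.1 n) hy.2.2)
      ((hgm n).mul hc).aestronglyMeasurable
  have hπ' : Tendsto (fun m => (P (ns m)).toReal) atTop (𝓝 π) :=
    hπ.congr fun m => heq (ns m)
  have hmono' : Monotone fun m => (P (ns m)).toReal := fun i j hij =>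
    ENNReal.toReal_mono (hfin _) (hPmono (hns.monotone hij))
  have hπ0 : (0 : ℝ) ≤ π := ge_of_tendsto' hπ' fun m => ENNReal.toReal_nonneg
  have hbound : ∀ m, P (ns m) ≤ ENNReal.ofReal π := fun m =>
    (ENNReal.le_ofReal_iff_toReal_le (hfin _) hπ0).2 (hmono'.ge_of_tendsto hπ' m)
  have hsup : (⨆ n, P n) ≤ ENNReal.ofReal π :=
    iSup_le fun n => (hPmono hns.le_apply).trans (hbound n)
  rw [htop] at hsup
  exact ENNReal.ofReal_ne_top (top_le_iff.1 hsup)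

private lemma limit_eq_integral_aux {g : ℕ → α → ℝ} {glim f : α → ℝ}
    (hgm : ∀ n, AEMeasurable (g n) μ) (hf : AEMeasurable f μ)
    (hmono : ∀ᵐ y ∂μ, (∀ n, 0 ≤ g n y) ∧ (∀ n, g n y ≤ g (n + 1) y) ∧
      Tendsto (fun n => g n y) atTop (𝓝 (glim y)))
    {ns : ℕ → ℕ} (hns : StrictMono ns) {a p q : ℝ}
    (ha : Tendsto (fun m => ∫ y, g (ns m) y * f y ∂μ) atTop (𝓝 a))
    (hp : Tendsto (fun m => ∫ y, g (ns m) y * max (f y) 0 ∂μ) atTop (𝓝 p))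
    (hq : Tendsto (fun m => ∫ y, g (ns m) y * max (-f y) 0 ∂μ) atTop (𝓝 q)) :
    a = ∫ y, glim y * f y ∂μ := by
  have hglim : AEMeasurable glim μ :=
    aemeasurable_of_tendsto_metrizable_ae' hgm (hmono.mono fun y hy => hy.2.2)
  have hgb : ∀ᵐ y ∂μ, ∀ n, g n y ≤ glim y :=
    hmono.mono fun y hy => (monotone_nat_of_le_succ hy.2.1).ge_of_tendsto hy.2.2
  have hglim0 : ∀ᵐ y ∂μ, 0 ≤ glim y := by
    filter_upwards [hmono, hgb] with y h1 h2 using le_trans (h1.1 0) (h2 0)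
  have hfp : AEMeasurable (fun y => max (f y) 0) μ := hf.max aemeasurable_const
  have hfn : AEMeasurable (fun y => max (-f y) 0) μ := hf.neg.max aemeasurable_const
  set P : ℕ → ℝ≥0∞ := fun n => ∫⁻ y, ENNReal.ofReal (g n y * max (f y) 0) ∂μ with hPdef
  set N : ℕ → ℝ≥0∞ := fun n => ∫⁻ y, ENNReal.ofReal (g n y * max (-f y) 0) ∂μ with hNdef
  set Pinf : ℝ≥0∞ := ∫⁻ y, ENNReal.ofReal (glim y * max (f y) 0) ∂μ with hPinfdef
  set Ninf : ℝ≥0∞ := ∫⁻ y, ENNReal.ofReal (glim y * max (-f y) 0) ∂μ with hNinfdef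
  have hPtend : Tendsto P atTop (𝓝 Pinf) :=
    lintegral_tendsto_of_tendsto_of_monotone
      (fun n => ENNReal.measurable_ofReal.comp_aemeasurable ((hgm n).mul hfp))
      (hmono.mono fun y hy => monotone_nat_of_le_succ fun n =>
        ENNReal.ofReal_le_ofReal (mul_le_mul_of_nonneg_right (hy.2.1 n) (le_max_right _ _)))
      (hmono.mono fun y hy => ENNReal.tendsto_ofReal (hy.2.2.mul_const _))
  have hNtend : Tendsto N atTop (𝓝 Ninf) :=
    lintegral_tendsto_of_tendsto_of_monotone
      (fun n => ENNReal.measurable_ofReal.comp_aemeasurable ((hgm n).mul hfn))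
      (hmono.mono fun y hy => monotone_nat_of_le_succ fun n =>
        ENNReal.ofReal_le_ofReal (mul_le_mul_of_nonneg_right (hy.2.1 n) (le_max_right _ _)))
      (hmono.mono fun y hy => ENNReal.tendsto_ofReal (hy.2.2.mul_const _))
  have hPmono : Monotone P := monotone_nat_of_le_succ fun n =>
    lintegral_mono_ae (hmono.mono fun y hy =>
      ENNReal.ofReal_le_ofReal (mul_le_mul_of_nonneg_right (hy.2.1 n) (le_max_right _ _)))
  have hNmono : Monotone N := monotone_nat_of_le_succ fun n =>
    lintegral_mono_ae (hmono.mono fun y hy =>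
      ENNReal.ofReal_le_ofReal (mul_le_mul_of_nonneg_right (hy.2.1 n) (le_max_right _ _)))
  by_cases hPtop : Pinf = ∞
  · -- positive part blows up
    have hsup : (⨆ n, P n) = ∞ :=
      (tendsto_nhds_unique (tendsto_atTop_iSup hPmono) hPtend).trans hPtop
    obtain ⟨n₀, hn₀⟩ := exists_top_aux hgm hfp
      (hmono.mono fun y hy => ⟨hy.1, hy.2.1, le_max_right _ _⟩) hns hp hsup
    have hPn : ∀ n, n₀ ≤ n → P n = ∞ := fun n hn => top_le_iff.1 (hn₀ ▸ hPmono hn)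
    have hzero : ∀ n, n₀ ≤ n → ∫ y, g n y * f y ∂μ = 0 := fun n hn =>
      integral_undef (not_integrable_aux (hmono.mono fun y hy => hy.1 n) (hPn n hn))
    have haz : Tendsto (fun m => ∫ y, g (ns m) y * f y ∂μ) atTop (𝓝 (0 : ℝ)) := by
      refine Tendsto.congr' ?_ tendsto_const_nhds
      filter_upwards [eventually_ge_atTop n₀] with m hm
      exact (hzero (ns m) (hm.trans hns.le_apply)).symm
    rw [tendsto_nhds_unique ha haz,
      integral_undef (not_integrable_aux hglim0 hPtop)]
  · by_cases hNtop : Ninf = ∞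
    · -- negative part blows up
      have hsup : (⨆ n, N n) = ∞ :=
        (tendsto_nhds_unique (tendsto_atTop_iSup hNmono) hNtend).trans hNtop
      obtain ⟨n₀, hn₀⟩ := exists_top_aux hgm hfn
        (hmono.mono fun y hy => ⟨hy.1, hy.2.1, le_max_right _ _⟩) hns hq hsup
      have hNn : ∀ n, n₀ ≤ n → N n = ∞ := fun n hn => top_le_iff.1 (hn₀ ▸ hNmono hn)
      have hzero : ∀ n, n₀ ≤ n → ∫ y, g n y * f y ∂μ = 0 := fun n hn =>
        integral_undef (not_integrable_aux' (hmono.mono fun y hy => hy.1 n) (hNn n hn))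
      have haz : Tendsto (fun m => ∫ y, g (ns m) y * f y ∂μ) atTop (𝓝 (0 : ℝ)) := by
        refine Tendsto.congr' ?_ tendsto_const_nhds
        filter_upwards [eventually_ge_atTop n₀] with m hm
        exact (hzero (ns m) (hm.trans hns.le_apply)).symm
      rw [tendsto_nhds_unique ha haz,
        integral_undef (not_integrable_aux' hglim0 hNtop)]
    · -- both parts stay finite
      have hPfin : ∀ n, P n ≠ ∞ := fun n =>
        ne_top_of_le_ne_top hPtop (hPmono.ge_of_tendsto hPtend n)
      have hNfin : ∀ n, N n ≠ ∞ := fun n =>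
        ne_top_of_le_ne_top hNtop (hNmono.ge_of_tendsto hNtend n)
      have heq : ∀ n, ∫ y, g n y * f y ∂μ = (P n).toReal - (N n).toReal := fun n =>
        integral_eq_aux (hgm n) hf (hmono.mono fun y hy => hy.1 n) (hPfin n) (hNfin n)
      have heqlim : ∫ y, glim y * f y ∂μ = Pinf.toReal - Ninf.toReal :=
        integral_eq_aux hglim hf hglim0 hPtop hNtop
      have htendsto : Tendsto (fun m => (P (ns m)).toReal - (N (ns m)).toReal) atTop
          (𝓝 (Pinf.toReal - Ninf.toReal)) :=
        (((ENNReal.tendsto_toReal hPtop).comp (hPtend.comp hns.tendsto_atTop)).sub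
          ((ENNReal.tendsto_toReal hNtop).comp (hNtend.comp hns.tendsto_atTop)))
      rw [heqlim]
      exact tendsto_nhds_unique (ha.congr fun m => heq (ns m)) htendsto

end Aux

/-- Lemma 1(ii): if `Aₙ → A` strongly, each `Aₙ` has integral kernel `kₙ(x,y)`,
and `0 ≤ kₙ(x,y) ↑ k(x,y)` for `λ⊗λ`-a.e. `(x,y)`, then `A` has integral
kernel `k`. -/
theorem kernel_of_strong_limit
    (lam : Measure R) [lam.Regular] [SigmaFinite lam]
    (A : ℕ → (Lp ℝ 2 lam →L[ℝ] Lp ℝ 2 lam)) (Alim : Lp ℝ 2 lam →L[ℝ] Lp ℝ 2 lam)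
    (k : ℕ → R → R → ℝ) (klim : R → R → ℝ)
    (hmeas : ∀ n, Measurable (Function.uncurry (k n)))
    (hstrong : ∀ φ : Lp ℝ 2 lam, Tendsto (fun n => A n φ) atTop (nhds (Alim φ)))
    (hker : ∀ n, IsKernelOf lam (A n) (k n))
    (hae : ∀ᵐ q ∂(lam.prod lam),
      (∀ n, 0 ≤ k n q.1 q.2) ∧ (∀ n, k n q.1 q.2 ≤ k (n + 1) q.1 q.2) ∧
        Tendsto (fun n => k n q.1 q.2) atTop (nhds (klim q.1 q.2))) :
    IsKernelOf lam Alim klim := by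
  intro φ
  set ψp := Lp.posPart φ with hψp
  set ψm := Lp.negPart φ with hψm
  -- convergence in measure for each of φ, ψp, ψm
  have hTIM : ∀ χ : Lp ℝ 2 lam, TendstoInMeasure lam (fun n => ⇑(A n χ)) atTop (Alim χ) :=
    fun χ => tendstoInMeasure_of_tendsto_Lp (hstrong χ)
  have hTIMcomp : ∀ (χ : Lp ℝ 2 lam) (ms : ℕ → ℕ), StrictMono ms →
      TendstoInMeasure lam (fun m => ⇑(A (ms m) χ)) atTop (Alim χ) :=
    fun χ ms hms ε hε => (hTIM χ ε hε).comp hms.tendsto_atTop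
  obtain ⟨n1, hn1mono, hn1⟩ := (hTIM φ).exists_seq_tendsto_ae
  obtain ⟨n2, hn2mono, hn2⟩ := (hTIMcomp ψp n1 hn1mono).exists_seq_tendsto_ae
  obtain ⟨n3, hn3mono, hn3⟩ :=
    (hTIMcomp ψm (n1 ∘ n2) (hn1mono.comp hn2mono)).exists_seq_tendsto_ae
  set ns : ℕ → ℕ := n1 ∘ n2 ∘ n3 with hnsdef
  have hnsmono : StrictMono ns := hn1mono.comp (hn2mono.comp hn3mono)
  -- a.e. pointwise convergence along the subsequence
  have hφae : ∀ᵐ x ∂lam, Tendsto (fun m => (A (ns m) φ : R → ℝ) x) atTop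
      (𝓝 ((Alim φ : R → ℝ) x)) :=
    hn1.mono fun x hx => hx.comp ((hn2mono.comp hn3mono).tendsto_atTop)
  have hψpae : ∀ᵐ x ∂lam, Tendsto (fun m => (A (ns m) ψp : R → ℝ) x) atTop
      (𝓝 ((Alim ψp : R → ℝ) x)) :=
    hn2.mono fun x hx => hx.comp hn3mono.tendsto_atTop
  have hψmae : ∀ᵐ x ∂lam, Tendsto (fun m => (A (ns m) ψm : R → ℝ) x) atTop
      (𝓝 ((Alim ψm : R → ℝ) x)) := hn3
  -- kernel identities, all n at once
  have hker1 : ∀ᵐ x ∂lam, ∀ n, (A n φ : R → ℝ) x = ∫ y, k n x y * (φ : R → ℝ) y ∂lam :=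
    ae_all_iff.2 fun n => hker n φ
  have hker2 : ∀ᵐ x ∂lam, ∀ n, (A n ψp : R → ℝ) x = ∫ y, k n x y * (ψp : R → ℝ) y ∂lam :=
    ae_all_iff.2 fun n => hker n ψp
  have hker3 : ∀ᵐ x ∂lam, ∀ n, (A n ψm : R → ℝ) x = ∫ y, k n x y * (ψm : R → ℝ) y ∂lam :=
    ae_all_iff.2 fun n => hker n ψm
  have hFub : ∀ᵐ x ∂lam, ∀ᵐ y ∂lam,
      (∀ n, 0 ≤ k n x y) ∧ (∀ n, k n x y ≤ k (n + 1) x y) ∧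
        Tendsto (fun n => k n x y) atTop (𝓝 (klim x y)) :=
    Measure.ae_ae_of_ae_prod hae
  -- coercion identities for pos/neg parts
  have hpp : (ψp : R → ℝ) =ᵐ[lam] fun y => max ((φ : R → ℝ) y) 0 := Lp.coeFn_posPart φ
  have hmm : ∀ᵐ y ∂lam, (ψm : R → ℝ) y = max (-(φ : R → ℝ) y) 0 := Lp.coeFn_negPart_eq_max φ
  filter_upwards [hφae, hψpae, hψmae, hker1, hker2, hker3, hFub] with x hφx hpx hmx hk1 hk2 hk3 hyx
  have hgm : ∀ n, AEMeasurable (fun y => k n x y) lam := fun n =>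
    ((hmeas n).comp measurable_prodMk_left).aemeasurable
  have hintp : ∀ n, ∫ y, k n x y * (ψp : R → ℝ) y ∂lam
      = ∫ y, k n x y * max ((φ : R → ℝ) y) 0 ∂lam := fun n =>
    integral_congr_ae (hpp.mono fun y hy => by dsimp only at hy ⊢; rw [hy])
  have hintm : ∀ n, ∫ y, k n x y * (ψm : R → ℝ) y ∂lam
      = ∫ y, k n x y * max (-(φ : R → ℝ) y) 0 ∂lam := fun n =>
    integral_congr_ae (hmm.mono fun y hy => by dsimp only at hy ⊢; rw [hy])
  refine limit_eq_integral_aux (glim := fun y => klim x y) hgm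
    (Lp.aestronglyMeasurable φ).aemeasurable hyx hnsmono
    (a := (Alim φ : R → ℝ) x) (p := (Alim ψp : R → ℝ) x) (q := (Alim ψm : R → ℝ) x)
    ?_ ?_ ?_
  · exact hφx.congr fun m => hk1 (ns m)
  · exact hpx.congr fun m => (hk2 (ns m)).trans (hintp (ns m))
  · exact hmx.congr fun m => (hk3 (ns m)).trans (hintm (ns m))
end
end

section
/- The function (1 + K_Λ)^{−1} χ_Λ is non-negative λ-almost everywhere on R, where χ_Λ is regarded as an element of L²(R;λ). -/
/-!
Let `u = 1_Λ · G h` be the probability of returning to `Λ`, where `h` is the probability of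
hitting `Λ`, and let `ψ = 1_Λ - u ∈ [0, 1]` be the escape probability. Splitting every path of
length `m + 1` that ends in `Λ` at its last visit to `Λ` before the final step gives, on `Λ`,
`∑ₘ G^(m+1) 1_Λ = ∑ⱼ Gʲ u = u + ∑ₘ G^(m+1) u`. Subtracting (legitimate where `K_Λ 1_Λ` is
finite) yields `K_Λ ψ = u` on `Λ`, i.e. `(1 + K_Λ) ψ = 1_Λ`, so `(1 + K_Λ)⁻¹ 1_Λ = ψ ≥ 0`.

All path sums are computed in `[0, ∞]`, where they can be rearranged freely. They are linked to
the `L²` operators through an a.e. convergent subsequence of `S n φ → K_Λ φ`; since the partial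
sums increase, this also shows that `K_Λ 1_Λ` is finite a.e.
-/

open MeasureTheory Filter
open scoped ENNReal NNReal

noncomputable section

variable {R : Type*} [TopologicalSpace R] [T2Space R] [LocallyCompactSpace R]
  [SecondCountableTopology R] [MeasurableSpace R] [BorelSpace R]

/-- the iterated kernels: `iterKer lam g n` is the kernel of `G^{n+1}`,
computed in `[0,∞]`. -/
def iterKer {R : Type*} [MeasurableSpace R] (lam : Measure R) (g : R → R → ℝ) :
    ℕ → R → R → ℝ≥0∞
  | 0 => fun x y => ENNReal.ofReal (g x y)
  | (n + 1) => fun x y => ∫⁻ z, iterKer lam g n x z * ENNReal.ofReal (g z y) ∂lam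

open Finset in
lemma ENNReal.tsum_sum_antidiagonal (f : ℕ × ℕ → ℝ≥0∞) :
    ∑' n, ∑ p ∈ antidiagonal n, f p = ∑' p, f p := by
  rw [← HasAntidiagonal.sigmaAntidiagonalEquivProd.tsum_eq, ENNReal.tsum_sigma']
  exact tsum_congr fun n => (Finset.tsum_subtype _ _).symm

lemma ae_tsum_ne_top_and_eq_of_tendsto_Lp {X : Type*} [MeasurableSpace X] {lam : Measure X}
    {p : ℝ≥0∞} [Fact (1 ≤ p)] {f : ℕ → Lp ℝ p lam} {F : Lp ℝ p lam}
    (hf : Tendsto f atTop (nhds F)) {b : ℕ → X → ℝ≥0∞} (hb : ∀ j x, b j x ≠ ∞)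
    (hfb : ∀ n, f n =ᵐ[lam] fun x => (∑ j ∈ Finset.range n, b j x).toReal) :
    ∀ᵐ x ∂lam, ∑' j, b j x ≠ ∞ ∧ F x = (∑' j, b j x).toReal := by
  obtain ⟨ns, hns, hae⟩ := (tendstoInMeasure_of_tendsto_Lp hf).exists_seq_tendsto_ae
  filter_upwards [hae, ae_all_iff.2 hfb] with x hx hfx
  set s : ℕ → ℝ≥0∞ := fun n => ∑ j ∈ Finset.range n, b j x
  have hs (n : ℕ) : s n ≠ ∞ := ENNReal.sum_ne_top.2 fun j _ => hb j x
  simp only [hfx] at hx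
  obtain ⟨B, hB⟩ := hx.bddAbove_range
  have hle (n : ℕ) : s n ≤ ENNReal.ofReal B :=
    calc s n ≤ s (ns n) := Finset.sum_le_sum_of_subset (Finset.range_mono (hns.id_le n))
      _ ≤ ENNReal.ofReal B := by
        rw [← ENNReal.ofReal_toReal (hs (ns n))]
        exact ENNReal.ofReal_le_ofReal (hB ⟨n, rfl⟩)
  have hfin : ∑' j, b j x ≠ ∞ := by
    rw [ENNReal.tsum_eq_iSup_nat]
    exact ne_top_of_le_ne_top ENNReal.ofReal_ne_top (iSup_le hle)
  refine ⟨hfin, tendsto_nhds_unique hx ?_⟩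
  exact ((ENNReal.tendsto_toReal hfin).comp (ENNReal.tendsto_nat_tsum _)).comp hns.tendsto_atTop

lemma memLp_toReal_of_le_indicator {X : Type*} [MeasurableSpace X] {lam : Measure X} {Λ : Set X}
    (hΛ : MeasurableSet Λ) (hΛfin : lam Λ ≠ ∞) {ψ : X → ℝ≥0∞} (hψ : Measurable ψ)
    (hψΛ : ψ ≤ Λ.indicator 1) (p : ℝ≥0∞) : MemLp (fun x => (ψ x).toReal) p lam := by
  refine (memLp_indicator_const p hΛ (1 : ℝ) (Or.inr hΛfin)).of_le
    hψ.ennreal_toReal.aestronglyMeasurable (ae_of_all _ fun x => ?_)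
  by_cases hx : x ∈ Λ
  · simpa [hx] using ENNReal.toReal_mono ENNReal.one_ne_top (by simpa [hx] using hψΛ x)
  · simp [hx, show ψ x = 0 by simpa [hx] using hψΛ x]

section

variable {X : Type*} [MeasurableSpace X] {lam : Measure X} {g : X → X → ℝ} {Λ : Set X}

variable (lam g) in
def integralOp (f : X → ℝ≥0∞) (x : X) : ℝ≥0∞ :=
  ∫⁻ y, ENNReal.ofReal (g x y) * f y ∂lam

local notation "𝒢" => integralOp lam g

lemma measurable_ofReal_kernel_left (hg : Measurable (Function.uncurry g)) (x : X) :
    Measurable fun y => ENNReal.ofReal (g x y) :=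
  ENNReal.measurable_ofReal.comp (hg.comp measurable_prodMk_left)

lemma measurable_integralOp [SFinite lam] (hg : Measurable (Function.uncurry g))
    {f : X → ℝ≥0∞} (hf : Measurable f) : Measurable (𝒢 f) :=
  ((ENNReal.measurable_ofReal.comp hg).mul (hf.comp measurable_snd)).lintegral_prod_right'

lemma measurable_iterate_integralOp [SFinite lam] (hg : Measurable (Function.uncurry g))
    {f : X → ℝ≥0∞} (hf : Measurable f) (n : ℕ) : Measurable (𝒢^[n] f) := by
  induction n with
  | zero => exact hf
  | succ n ih => rw [Function.iterate_succ_apply']; exact measurable_integralOp hg ih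

lemma integralOp_mono {f f' : X → ℝ≥0∞} (h : f ≤ f') : 𝒢 f ≤ 𝒢 f' :=
  fun _ => lintegral_mono fun y => mul_le_mul_right (h y) _

lemma iterate_integralOp_mono {f f' : X → ℝ≥0∞} (h : f ≤ f') (n : ℕ) : 𝒢^[n] f ≤ 𝒢^[n] f' :=
  Monotone.iterate (fun _ _ => integralOp_mono) n h

lemma integralOp_le_one (hgint : ∀ x, ∫⁻ y, ENNReal.ofReal (g x y) ∂lam ≤ 1)
    {f : X → ℝ≥0∞} (hf : f ≤ 1) : 𝒢 f ≤ 1 := fun x =>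
  calc 𝒢 f x ≤ ∫⁻ y, ENNReal.ofReal (g x y) * 1 ∂lam :=
        lintegral_mono fun y => mul_le_mul_right (hf y) _
    _ ≤ 1 := by simpa using hgint x

lemma iterate_integralOp_le_one (hgint : ∀ x, ∫⁻ y, ENNReal.ofReal (g x y) ∂lam ≤ 1)
    {f : X → ℝ≥0∞} (hf : f ≤ 1) (n : ℕ) : 𝒢^[n] f ≤ 1 := by
  induction n with
  | zero => exact hf
  | succ n ih => rw [Function.iterate_succ_apply']; exact integralOp_le_one hgint ih

lemma integralOp_add (hg : Measurable (Function.uncurry g)) {f f' : X → ℝ≥0∞}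
    (hf : Measurable f) : 𝒢 (f + f') = 𝒢 f + 𝒢 f' := by
  funext x
  simp only [integralOp, Pi.add_apply, mul_add]
  exact lintegral_add_left ((measurable_ofReal_kernel_left hg x).mul hf) _

lemma integralOp_sum (hg : Measurable (Function.uncurry g)) {ι : Type*} (s : Finset ι)
    {f : ι → X → ℝ≥0∞} (hf : ∀ i, Measurable (f i)) :
    𝒢 (∑ i ∈ s, f i) = ∑ i ∈ s, 𝒢 (f i) := by
  funext x
  simp only [integralOp, Finset.sum_apply, Finset.mul_sum]
  exact lintegral_finsetSum s fun i _ => (measurable_ofReal_kernel_left hg x).mul (hf i)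

lemma integralOp_tsum (hg : Measurable (Function.uncurry g)) {ι : Type*} [Countable ι]
    {f : ι → X → ℝ≥0∞} (hf : ∀ i, Measurable (f i)) :
    𝒢 (fun x => ∑' i, f i x) = fun x => ∑' i, 𝒢 (f i) x := by
  funext x
  simp only [integralOp, ← ENNReal.tsum_mul_left]
  exact lintegral_tsum fun i => ((measurable_ofReal_kernel_left hg x).mul (hf i)).aemeasurable

lemma iterate_integralOp_tsum [SFinite lam] (hg : Measurable (Function.uncurry g)) {ι : Type*}
    [Countable ι] {f : ι → X → ℝ≥0∞} (hf : ∀ i, Measurable (f i)) (n : ℕ) :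
    𝒢^[n] (fun x => ∑' i, f i x) = fun x => ∑' i, 𝒢^[n] (f i) x := by
  induction n with
  | zero => rfl
  | succ n ih =>
    simp only [Function.iterate_succ_apply', ih]
    exact integralOp_tsum hg fun i => measurable_iterate_integralOp hg (hf i) n

lemma integralOp_sub (hg : Measurable (Function.uncurry g)) {f h : X → ℝ≥0∞}
    (hh : Measurable h) (hle : h ≤ f) {x : X} (hfin : 𝒢 h x ≠ ∞) :
    𝒢 (f - h) x = 𝒢 f x - 𝒢 h x := by
  simp only [integralOp, Pi.sub_apply, ENNReal.mul_sub fun _ _ => ENNReal.ofReal_ne_top]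
  exact lintegral_sub ((measurable_ofReal_kernel_left hg x).mul hh) hfin
    (ae_of_all _ fun y => mul_le_mul_right (hle y) _)

lemma iterate_integralOp_sub [SFinite lam] (hg : Measurable (Function.uncurry g))
    (hgint : ∀ x, ∫⁻ y, ENNReal.ofReal (g x y) ∂lam ≤ 1) {f h : X → ℝ≥0∞}
    (hh : Measurable h) (hle : h ≤ f) (h1 : h ≤ 1) (n : ℕ) :
    𝒢^[n] (f - h) = 𝒢^[n] f - 𝒢^[n] h := by
  induction n with
  | zero => rfl
  | succ n ih =>
    funext x
    simp only [Function.iterate_succ_apply', ih]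
    exact integralOp_sub hg (measurable_iterate_integralOp hg hh n)
      (iterate_integralOp_mono hle n)
      (ne_top_of_le_ne_top ENNReal.one_ne_top (integralOp_le_one hgint
        (iterate_integralOp_le_one hgint h1 n) x))

lemma measurable_iterKer [SFinite lam] (hg : Measurable (Function.uncurry g)) (n : ℕ) :
    Measurable (Function.uncurry (iterKer lam g n)) := by
  induction n with
  | zero => exact ENNReal.measurable_ofReal.comp hg
  | succ n ih =>
    have hprod : Measurable fun q : (X × X) × X =>
        iterKer lam g n q.1.1 q.2 * ENNReal.ofReal (g q.2 q.1.2) :=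
      (ih.comp (measurable_fst.fst.prodMk measurable_snd)).mul
        ((ENNReal.measurable_ofReal.comp hg).comp (measurable_snd.prodMk measurable_fst.snd))
    exact hprod.lintegral_prod_right'

lemma lintegral_iterKer_mul [SFinite lam] (hg : Measurable (Function.uncurry g)) (n : ℕ)
    {f : X → ℝ≥0∞} (hf : Measurable f) (x : X) :
    ∫⁻ y, iterKer lam g n x y * f y ∂lam = 𝒢^[n + 1] f x := by
  induction n generalizing f with
  | zero => rfl
  | succ n ih =>
    have hK : Measurable (iterKer lam g n x) :=
      (measurable_iterKer hg n).comp measurable_prodMk_left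
    calc ∫⁻ y, iterKer lam g (n + 1) x y * f y ∂lam
        = ∫⁻ y, ∫⁻ z, iterKer lam g n x z * ENNReal.ofReal (g z y) * f y ∂lam ∂lam := by
          refine lintegral_congr fun y => (lintegral_mul_const _ ?_).symm
          exact hK.mul (ENNReal.measurable_ofReal.comp (hg.comp measurable_prodMk_right))
      _ = ∫⁻ z, ∫⁻ y, iterKer lam g n x z * ENNReal.ofReal (g z y) * f y ∂lam ∂lam := by
          refine lintegral_lintegral_swap (Measurable.aemeasurable ?_)
          exact ((hK.comp measurable_snd).mul ((ENNReal.measurable_ofReal.comp hg).comp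
            measurable_swap)).mul (hf.comp measurable_fst)
      _ = ∫⁻ z, iterKer lam g n x z * 𝒢 f z ∂lam := by
          refine lintegral_congr fun z => ?_
          simp only [mul_assoc]
          exact lintegral_const_mul _ ((measurable_ofReal_kernel_left hg z).mul hf)
      _ = 𝒢^[n + 2] f x := by
          rw [ih (measurable_integralOp hg hf), ← Function.iterate_succ_apply]

lemma ae_iterKer_ne_top [SFinite lam] (hg : Measurable (Function.uncurry g))
    (hgint : ∀ x, ∫⁻ y, ENNReal.ofReal (g x y) ∂lam ≤ 1) (n : ℕ) (x : X) :
    ∀ᵐ y ∂lam, iterKer lam g n x y ≠ ∞ := by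
  have hint : ∫⁻ y, iterKer lam g n x y ∂lam ≤ 1 := by
    simpa using (lintegral_iterKer_mul hg n measurable_const x).trans_le
      (iterate_integralOp_le_one hgint le_rfl (n + 1) x)
  filter_upwards [ae_lt_top ((measurable_iterKer hg n).comp measurable_prodMk_left)
    (ne_top_of_le_ne_top ENNReal.one_ne_top hint)] with y hy using hy.ne

-- `firstHit n x` is the mass of the paths of length `n` from `x` that first visit `Λ` at step `n`.
variable (lam g Λ) in
def firstHit : ℕ → X → ℝ≥0∞
  | 0 => Λ.indicator 1
  | n + 1 => Λᶜ.indicator (𝒢 (firstHit n))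

variable (lam g Λ) in
def firstReturn (n : ℕ) : X → ℝ≥0∞ := Λ.indicator (𝒢 (firstHit lam g Λ n))

variable (lam g Λ) in
def returnProb : X → ℝ≥0∞ := fun x => ∑' n, firstReturn lam g Λ n x

lemma integralOp_firstHit (n : ℕ) :
    𝒢 (firstHit lam g Λ n) = firstReturn lam g Λ n + firstHit lam g Λ (n + 1) :=
  (Set.indicator_self_add_compl Λ _).symm

section

variable [SFinite lam] (hg : Measurable (Function.uncurry g)) (hΛ : MeasurableSet Λ)
include hg hΛ

lemma measurable_firstHit (n : ℕ) : Measurable (firstHit lam g Λ n) := by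
  induction n with
  | zero => exact measurable_one.indicator hΛ
  | succ n ih => exact (measurable_integralOp hg ih).indicator hΛ.compl

lemma measurable_firstReturn (n : ℕ) : Measurable (firstReturn lam g Λ n) :=
  (measurable_integralOp hg (measurable_firstHit hg hΛ n)).indicator hΛ

lemma measurable_returnProb : Measurable (returnProb lam g Λ) :=
  .tsum fun n => measurable_firstReturn hg hΛ n

lemma sum_range_firstHit_le_one (hgint : ∀ x, ∫⁻ y, ENNReal.ofReal (g x y) ∂lam ≤ 1) (n : ℕ) :
    ∑ k ∈ Finset.range n, firstHit lam g Λ k ≤ 1 := by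
  induction n with
  | zero => simp
  | succ n ih =>
    intro x
    rw [Finset.sum_range_succ', Pi.add_apply, Finset.sum_apply]
    by_cases hx : x ∈ Λ
    · simp [firstHit, hx]
    · simp only [firstHit, Set.indicator_of_notMem hx, Set.indicator_of_mem (Set.mem_compl hx),
        add_zero]
      rw [← Finset.sum_apply, ← integralOp_sum hg _ (measurable_firstHit hg hΛ)]
      exact integralOp_le_one hgint ih x

lemma returnProb_le_indicator (hgint : ∀ x, ∫⁻ y, ENNReal.ofReal (g x y) ∂lam ≤ 1) :
    returnProb lam g Λ ≤ Λ.indicator 1 := by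
  have hHit (x : X) : ∑' n, firstHit lam g Λ n x ≤ 1 := by
    rw [ENNReal.tsum_eq_iSup_nat]
    exact iSup_le fun n => by simpa using sum_range_firstHit_le_one hg hΛ hgint n x
  intro x
  by_cases hx : x ∈ Λ
  · simp only [returnProb, firstReturn, Set.indicator_of_mem hx, Pi.one_apply]
    rw [← congrFun (integralOp_tsum hg (measurable_firstHit hg hΛ)) x]
    exact integralOp_le_one hgint hHit x
  · simp [returnProb, firstReturn, hx]

end

variable (lam g Λ) in
def escapeProb : X → ℝ≥0∞ := Λ.indicator 1 - returnProb lam g Λ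

lemma escapeProb_le_indicator : escapeProb lam g Λ ≤ Λ.indicator 1 := fun _ => tsub_le_self

section

variable [SFinite lam] (hg : Measurable (Function.uncurry g)) (hΛ : MeasurableSet Λ)
include hg hΛ

lemma measurable_escapeProb : Measurable (escapeProb lam g Λ) :=
  (measurable_one.indicator hΛ).sub (measurable_returnProb hg hΛ)

open Finset in
/-- Paths of length `m + 1` ending in `Λ`, split at the time `p.2` of their last visit to `Λ`
before the final step (the `firstHit` term collects the paths with no such visit). -/
lemma iterate_integralOp_indicator_eq_sum_antidiagonal (m : ℕ) :
    𝒢^[m + 1] (Λ.indicator 1) = ∑ p ∈ antidiagonal m, 𝒢^[p.2] (firstReturn lam g Λ p.1)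
      + firstHit lam g Λ (m + 1) := by
  induction m with
  | zero =>
    simp only [zero_add, Function.iterate_one, Nat.antidiagonal_zero, sum_singleton,
      Function.iterate_zero, id]
    exact integralOp_firstHit 0
  | succ m ih =>
    have hmeas (p : ℕ × ℕ) : Measurable (𝒢^[p.2] (firstReturn lam g Λ p.1)) :=
      measurable_iterate_integralOp hg (measurable_firstReturn hg hΛ p.1) p.2
    rw [Function.iterate_succ_apply', ih, integralOp_add hg
      (Finset.sum_induction _ Measurable (fun _ _ => .add) measurable_const fun p _ => hmeas p),
      integralOp_sum hg _ hmeas, integralOp_firstHit, Nat.sum_antidiagonal_succ']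
    simp only [← Function.iterate_succ_apply' (integralOp lam g), Function.iterate_zero, id]
    abel

open Finset in
lemma tsum_iterate_integralOp_indicator_eq_tsum_iterate_returnProb {x : X} (hx : x ∈ Λ) :
    ∑' m, 𝒢^[m + 1] (Λ.indicator 1) x = ∑' j, 𝒢^[j] (returnProb lam g Λ) x := by
  have hHit (m : ℕ) : firstHit lam g Λ (m + 1) x = 0 :=
    Set.indicator_of_notMem (Set.notMem_compl_iff.mpr hx) _
  calc ∑' m, 𝒢^[m + 1] (Λ.indicator 1) x
      = ∑' m, ∑ p ∈ antidiagonal m, 𝒢^[p.2] (firstReturn lam g Λ p.1) x := by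
        simp [iterate_integralOp_indicator_eq_sum_antidiagonal hg hΛ, hHit]
    _ = ∑' j, ∑' i, 𝒢^[j] (firstReturn lam g Λ i) x := by
        rw [ENNReal.tsum_sum_antidiagonal]
        exact (ENNReal.tsum_prod (f := fun i j => 𝒢^[j] (firstReturn lam g Λ i) x)).trans
          ENNReal.tsum_comm
    _ = ∑' j, 𝒢^[j] (returnProb lam g Λ) x := by
        unfold returnProb
        simp only [iterate_integralOp_tsum hg (measurable_firstReturn hg hΛ)]

/-- Pointwise form of `(1 + K_Λ) ψ = 1_Λ`, where `K_Λ = ∑ₘ 1_Λ 𝒢^[m + 1] 1_Λ`. -/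
lemma escapeProb_add_tsum_indicator_iterate (hgint : ∀ x, ∫⁻ y, ENNReal.ofReal (g x y) ∂lam ≤ 1)
    {x : X} (hfin : ∑' m, Λ.indicator (𝒢^[m + 1] (Λ.indicator 1)) x ≠ ∞) :
    escapeProb lam g Λ x + ∑' m, Λ.indicator (𝒢^[m + 1] (escapeProb lam g Λ)) x
      = Λ.indicator 1 x := by
  by_cases hx : x ∈ Λ
  swap
  · simp [escapeProb, hx]
  simp only [Set.indicator_of_mem hx] at hfin ⊢
  have hu := returnProb_le_indicator hg hΛ hgint
  have hu1 : returnProb lam g Λ ≤ 1 := hu.trans (Set.indicator_le_self Λ 1)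
  have hsub (m : ℕ) : 𝒢^[m + 1] (escapeProb lam g Λ) x
      = 𝒢^[m + 1] (Λ.indicator 1) x - 𝒢^[m + 1] (returnProb lam g Λ) x := by
    rw [escapeProb, iterate_integralOp_sub hg hgint (measurable_returnProb hg hΛ) hu hu1]
    rfl
  have hsplit : ∑' m, 𝒢^[m + 1] (Λ.indicator 1) x
      = returnProb lam g Λ x + ∑' m, 𝒢^[m + 1] (returnProb lam g Λ) x := by
    rw [tsum_iterate_integralOp_indicator_eq_tsum_iterate_returnProb hg hΛ hx,
      tsum_eq_zero_add' ENNReal.summable]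
    rfl
  have hfin' : ∑' m, 𝒢^[m + 1] (returnProb lam g Λ) x ≠ ∞ :=
    ne_top_of_le_ne_top hfin (hsplit ▸ le_add_self)
  rw [tsum_congr hsub, ENNReal.tsum_sub hfin' fun m => iterate_integralOp_mono hu _ x, hsplit,
    ENNReal.add_sub_cancel_right hfin', escapeProb, Pi.sub_apply, Set.indicator_of_mem hx]
  exact tsub_add_cancel_of_le (hu1 x)

end

lemma integral_sum_iterKer_mul [SFinite lam] (hg : Measurable (Function.uncurry g))
    (hgint : ∀ x, ∫⁻ y, ENNReal.ofReal (g x y) ∂lam ≤ 1) {ψ : X → ℝ≥0∞} (hψ : Measurable ψ)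
    (hψfin : ∀ y, ψ y ≠ ∞) (n : ℕ) (x : X) :
    ∫ y, (∑ j ∈ Finset.range n, (iterKer lam g j x y).toReal) * (ψ y).toReal ∂lam
      = (∑ j ∈ Finset.range n, 𝒢^[j + 1] ψ x).toReal := by
  have hK (j : ℕ) : Measurable (iterKer lam g j x) :=
    (measurable_iterKer hg j).comp measurable_prodMk_left
  rw [integral_eq_lintegral_of_nonneg_ae
    (f := fun y => (∑ j ∈ Finset.range n, (iterKer lam g j x y).toReal) * (ψ y).toReal)
    (ae_of_all _ fun y => by positivity)
    ((Finset.measurable_sum _ fun j _ => (hK j).ennreal_toReal).mul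
      hψ.ennreal_toReal).aestronglyMeasurable]
  congr 1
  calc ∫⁻ y, ENNReal.ofReal
        ((∑ j ∈ Finset.range n, (iterKer lam g j x y).toReal) * (ψ y).toReal) ∂lam
      = ∫⁻ y, ∑ j ∈ Finset.range n, iterKer lam g j x y * ψ y ∂lam := by
        refine lintegral_congr_ae ?_
        filter_upwards [ae_all_iff.2 fun j => ae_iterKer_ne_top hg hgint j x] with y hy
        rw [← ENNReal.toReal_sum fun j _ => hy j, ← ENNReal.toReal_mul, Finset.sum_mul,
          ENNReal.ofReal_toReal
            (ENNReal.sum_ne_top.2 fun j _ => ENNReal.mul_ne_top (hy j) (hψfin y))]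
    _ = ∑ j ∈ Finset.range n, 𝒢^[j + 1] ψ x := by
        rw [lintegral_finsetSum (f := fun j y => iterKer lam g j x y * ψ y) _
          fun j _ => (hK j).mul hψ]
        exact Finset.sum_congr rfl fun j _ => lintegral_iterKer_mul hg j hψ x

lemma ae_eq_sum_indicator_iterate_of_isKernelOf [SFinite lam]
    (hg : Measurable (Function.uncurry g))
    (hgint : ∀ x, ∫⁻ y, ENNReal.ofReal (g x y) ∂lam ≤ 1) {n : ℕ}
    {A : Lp ℝ 2 lam →L[ℝ] Lp ℝ 2 lam}
    (hA : IsKernelOf lam A (fun x y => Λ.indicator 1 x *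
      (∑ j ∈ Finset.range n, (iterKer lam g j x y).toReal) * Λ.indicator 1 y))
    {ψ : X → ℝ≥0∞} (hψ : Measurable ψ) (hψΛ : ψ ≤ Λ.indicator 1) {φ : Lp ℝ 2 lam}
    (hφ : φ =ᵐ[lam] fun y => (ψ y).toReal) :
    A φ =ᵐ[lam] fun x => (∑ j ∈ Finset.range n, Λ.indicator (𝒢^[j + 1] ψ) x).toReal := by
  have hψfin (y : X) : ψ y ≠ ∞ := ne_top_of_le_ne_top (by by_cases hy : y ∈ Λ <;> simp [hy]) (hψΛ y)
  have hψsupp (y : X) : Λ.indicator 1 y * (ψ y).toReal = (ψ y).toReal := by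
    by_cases hy : y ∈ Λ
    · simp [hy]
    · simp [hy, show ψ y = 0 by simpa [hy] using hψΛ y]
  filter_upwards [hA φ] with x hx
  have hint : ∫ y, Λ.indicator 1 x * (∑ j ∈ Finset.range n, (iterKer lam g j x y).toReal)
        * Λ.indicator 1 y * φ y ∂lam
      = Λ.indicator 1 x * ∫ y, (∑ j ∈ Finset.range n, (iterKer lam g j x y).toReal)
        * (ψ y).toReal ∂lam := by
    rw [← integral_const_mul]
    refine integral_congr_ae ?_
    filter_upwards [hφ] with y hy
    rw [hy, mul_assoc _ (Λ.indicator 1 y), hψsupp y, mul_assoc]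
  rw [hx, hint, integral_sum_iterKer_mul hg hgint hψ hψfin]
  by_cases hxΛ : x ∈ Λ <;> simp [hxΛ]

theorem one_add_apply_eq_indicatorConstLp_of_ae_eq_escapeProb [SFinite lam]
    (hg : Measurable (Function.uncurry g))
    (hgint : ∀ x, ∫⁻ y, ENNReal.ofReal (g x y) ∂lam ≤ 1)
    (hΛ : MeasurableSet Λ) (hΛfin : lam Λ ≠ ∞) {S : ℕ → (Lp ℝ 2 lam →L[ℝ] Lp ℝ 2 lam)}
    (hS : ∀ n, IsKernelOf lam (S n) (fun x y => Λ.indicator 1 x *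
      (∑ j ∈ Finset.range n, (iterKer lam g j x y).toReal) * Λ.indicator 1 y))
    {K : Lp ℝ 2 lam →L[ℝ] Lp ℝ 2 lam} (hK : ∀ φ, Tendsto (fun n => S n φ) atTop (nhds (K φ)))
    {Ψ : Lp ℝ 2 lam} (hΨ : Ψ =ᵐ[lam] fun x => (escapeProb lam g Λ x).toReal) :
    (1 + K) Ψ = indicatorConstLp 2 hΛ hΛfin (1 : ℝ) := by
  have hχ : (indicatorConstLp 2 hΛ hΛfin (1 : ℝ) : X → ℝ)
      =ᵐ[lam] fun x => (Λ.indicator (1 : X → ℝ≥0∞) x).toReal := by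
    filter_upwards [indicatorConstLp_coeFn (p := 2) (hs := hΛ) (hμs := hΛfin) (c := (1 : ℝ))]
      with x hx
    by_cases hxΛ : x ∈ Λ <;> simp [hx, hxΛ]
  have hfin {f : X → ℝ≥0∞} (hf : f ≤ 1) (j : ℕ) (x : X) : Λ.indicator (𝒢^[j + 1] f) x ≠ ∞ :=
    ne_top_of_le_ne_top ENNReal.one_ne_top
      ((Set.indicator_le_self Λ _ x).trans (iterate_integralOp_le_one hgint hf _ x))
  have hKχ := ae_tsum_ne_top_and_eq_of_tendsto_Lp
    (hK (indicatorConstLp 2 hΛ hΛfin 1)) (hfin (Set.indicator_le_self Λ 1))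
    fun n => ae_eq_sum_indicator_iterate_of_isKernelOf hg hgint (hS n)
      (measurable_one.indicator hΛ) le_rfl hχ
  have hψ1 : escapeProb lam g Λ ≤ 1 := escapeProb_le_indicator.trans (Set.indicator_le_self Λ 1)
  have hKΨ := ae_tsum_ne_top_and_eq_of_tendsto_Lp (hK Ψ) (hfin hψ1)
    fun n => ae_eq_sum_indicator_iterate_of_isKernelOf hg hgint (hS n)
      (measurable_escapeProb hg hΛ) escapeProb_le_indicator hΨ
  refine Lp.ext ?_
  filter_upwards [Lp.coeFn_add Ψ (K Ψ), hΨ, hKχ, hKΨ, hχ] with x hadd hΨx hKχx hKΨx hχx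
  rw [add_apply, one_apply_eq_self, hadd, Pi.add_apply, hΨx,
    hKΨx.2, hχx, ← ENNReal.toReal_add (ne_top_of_le_ne_top ENNReal.one_ne_top (hψ1 x)) hKΨx.1,
    escapeProb_add_tsum_indicator_iterate hg hΛ hgint hKχx.1]

end

theorem inv_one_add_KLambda_indicator_nonneg_general
    (lam : Measure R) [SigmaFinite lam]
    (g : R → R → ℝ)
    (hgmeas : Measurable (Function.uncurry g))
    (hgint : ∀ x, ∫⁻ y, ENNReal.ofReal (g x y) ∂lam ≤ 1)
    (Λ : Set R) (hΛm : MeasurableSet Λ)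
    (hΛfin : lam Λ ≠ ∞)
    -- the partial sums `S n = Σ_{k=1}^n χ_Λ G^k χ_Λ`, uniformly bounded, with
    -- strong limit `K_Λ`:
    (S : ℕ → (Lp ℝ 2 lam →L[ℝ] Lp ℝ 2 lam))
    (hSker : ∀ n, IsKernelOf lam (S n) (fun x y =>
      Λ.indicator 1 x *
        (∑ j ∈ Finset.range n, (iterKer lam g j x y).toReal) * Λ.indicator 1 y))
    (KΛ : Lp ℝ 2 lam →L[ℝ] Lp ℝ 2 lam)
    (hKΛ : ∀ φ : Lp ℝ 2 lam, Tendsto (fun n => S n φ) atTop (nhds (KΛ φ)))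
    -- `J = (1+K_Λ)^{-1}`:
    (J : Lp ℝ 2 lam →L[ℝ] Lp ℝ 2 lam)
    (hJl : J.comp (1 + KΛ) = 1) :
    ∀ᵐ x ∂lam, 0 ≤ (J (indicatorConstLp 2 hΛm hΛfin (1 : ℝ)) : R → ℝ) x := by
  have hψ := memLp_toReal_of_le_indicator hΛm hΛfin (measurable_escapeProb (lam := lam) hgmeas hΛm)
    escapeProb_le_indicator 2
  have hJχ : J (indicatorConstLp 2 hΛm hΛfin (1 : ℝ)) = hψ.toLp _ := by
    rw [← one_add_apply_eq_indicatorConstLp_of_ae_eq_escapeProb hgmeas hgint hΛm hΛfin hSker hKΛ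
      hψ.coeFn_toLp, ← ContinuousLinearMap.comp_apply, hJl, one_apply_eq_self]
  rw [hJχ]
  filter_upwards [hψ.coeFn_toLp] with x hx
  rw [hx]
  exact ENNReal.toReal_nonneg

/-- Proposition 1(iv): `(1+K_Λ)^{-1}χ_Λ ≥ 0` `λ`-a.e., where `χ_Λ ∈ L²(R;λ)`. -/
theorem inv_one_add_KLambda_indicator_nonneg
    (lam : Measure R) [lam.Regular] [SigmaFinite lam]
    (G : Lp ℝ 2 lam →L[ℝ] Lp ℝ 2 lam) (g : R → R → ℝ)
    (hGsa : IsSelfAdjoint G)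
    (hGpos : ∀ φ : Lp ℝ 2 lam, 0 ≤ (inner ℝ φ (G φ) : ℝ))
    (hGle1 : ∀ φ : Lp ℝ 2 lam, (inner ℝ φ (G φ) : ℝ) ≤ (inner ℝ φ φ : ℝ))
    (hgmeas : Measurable (Function.uncurry g))
    (hgker : IsKernelOf lam G g)
    (hgpos : ∀ x y, 0 ≤ g x y) (hgsymm : ∀ x y, g x y = g y x)
    (hgint : ∀ x, ∫⁻ y, ENNReal.ofReal (g x y) ∂lam ≤ 1)
    (Λ : Set R) (hΛm : MeasurableSet Λ) (hΛb : IsCompact (closure Λ))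
    (hΛfin : lam Λ ≠ ∞)
    -- the partial sums `S n = Σ_{k=1}^n χ_Λ G^k χ_Λ`, uniformly bounded, with
    -- strong limit `K_Λ`:
    (S : ℕ → (Lp ℝ 2 lam →L[ℝ] Lp ℝ 2 lam))
    (hSker : ∀ n, IsKernelOf lam (S n) (fun x y =>
      Λ.indicator 1 x *
        (∑ j ∈ Finset.range n, (iterKer lam g j x y).toReal) * Λ.indicator 1 y))
    (hSbdd : ∃ C : ℝ, ∀ n, ‖S n‖ ≤ C)
    (KΛ : Lp ℝ 2 lam →L[ℝ] Lp ℝ 2 lam)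
    (hKΛ : ∀ φ : Lp ℝ 2 lam, Tendsto (fun n => S n φ) atTop (nhds (KΛ φ)))
    (hKΛsa : IsSelfAdjoint KΛ)
    (hKΛpos : ∀ φ : Lp ℝ 2 lam, 0 ≤ (inner ℝ φ (KΛ φ) : ℝ))
    -- `J = (1+K_Λ)^{-1}`:
    (J : Lp ℝ 2 lam →L[ℝ] Lp ℝ 2 lam)
    (hJl : J.comp (1 + KΛ) = 1) (hJr : (1 + KΛ).comp J = 1) :
    ∀ᵐ x ∂lam, 0 ≤ (J (indicatorConstLp 2 hΛm hΛfin (1 : ℝ)) : R → ℝ) x :=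
  inv_one_add_KLambda_indicator_nonneg_general lam g hgmeas hgint Λ hΛm hΛfin S hSker KΛ hKΛ J hJl
end
end

section
/- For all real x and p with 0 ≤ x ≤ 1, p ≥ 0 and px < 1, one has 1 ≥ (1+x)^p (1 − px) ≥ exp( − p(1+p)(1+px²) x² / (2(1−px)²) ). -/
/-! Both bounds compare logarithms. The upper one is `1 + t ≤ exp t` applied at `t = x` and
`t = -p x`. For the lower one, with `d = 1 - p x`, the bounds `log (1 + x) ≥ x - x² / 2` and
`log d ≥ (d - d⁻¹) / 2` (that is, `sinh s ≤ s` for `s = log d ≤ 0`) give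
`p log (1 + x) + log d ≥ -p x² (p + d) / (2 d)`, and `(p + d) d ≤ 1 + p` since `d ≤ 1`. -/

open Real

theorem Real.sub_sq_div_two_le_log_one_add {x : ℝ} (hx : 0 ≤ x) :
    x - x ^ 2 / 2 ≤ log (1 + x) := by
  refine le_trans ?_ (le_log_one_add_of_nonneg hx)
  rw [le_div_iff₀ (by linarith)]
  nlinarith [pow_nonneg hx 3]

theorem Real.half_sub_inv_le_log {y : ℝ} (hy₀ : 0 < y) (hy₁ : y ≤ 1) :
    (y - y⁻¹) / 2 ≤ log y := by
  rw [← sinh_log hy₀]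
  exact sinh_le_self_iff.2 (log_nonpos hy₀.le hy₁)

theorem elementary_inequality_general (x p : ℝ) (hx0 : 0 ≤ x)
    (hp : 0 ≤ p) (hpx : p * x < 1) :
    (1 + x) ^ p * (1 - p * x) ≤ 1 ∧
    Real.exp (-(p * (1 + p) * (1 + p * x ^ 2) * x ^ 2 / (2 * (1 - p * x) ^ 2)))
      ≤ (1 + x) ^ p * (1 - p * x) := by
  have h1x : 0 < 1 + x := by linarith
  set d := 1 - p * x with hd
  have hd₀ : 0 < d := by linarith
  have hd₁ : d ≤ 1 := sub_le_self 1 (mul_nonneg hp hx0)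
  constructor
  · calc (1 + x) ^ p * d ≤ exp x ^ p * exp (-(p * x)) := by
          gcongr
          · linarith [add_one_le_exp x]
          · linarith [add_one_le_exp (-(p * x))]
      _ = 1 := by rw [← exp_mul, ← exp_add, mul_comm, add_neg_cancel, exp_zero]
  · rw [← le_log_iff_exp_le (by positivity), log_mul (by positivity) hd₀.ne', log_rpow h1x]
    calc -(p * (1 + p) * (1 + p * x ^ 2) * x ^ 2 / (2 * d ^ 2))
        ≤ -(p * x ^ 2 * (p + d) / (2 * d)) := by
          have hpd : (p + d) * d ≤ (1 + p) * (1 + p * x ^ 2) := by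
            nlinarith [mul_nonneg hp (sq_nonneg x)]
          rw [neg_le_neg_iff, div_le_div_iff₀ (by positivity) (by positivity)]
          nlinarith [mul_le_mul_of_nonneg_left hpd (by positivity : 0 ≤ p * x ^ 2 * (2 * d))]
      _ = p * (x - x ^ 2 / 2) + (d - d⁻¹) / 2 := by
          field_simp
          rw [hd]
          ring
      _ ≤ p * log (1 + x) + log d := by
          gcongr
          · exact sub_sq_div_two_le_log_one_add hx0
          · exact half_sub_inv_le_log hd₀ hd₁

/-- Lemma A.1: for `0 ≤ x ≤ 1`, `p ≥ 0` with `p*x < 1`, one has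
`1 ≥ (1+x)^p (1 - p*x) ≥ exp(- p(1+p)(1+p x²) x² / (2(1-p x)²))`. -/
theorem elementary_inequality (x p : ℝ) (hx0 : 0 ≤ x) (hx1 : x ≤ 1)
    (hp : 0 ≤ p) (hpx : p * x < 1) :
    (1 + x) ^ p * (1 - p * x) ≤ 1 ∧
    Real.exp (-(p * (1 + p) * (1 + p * x ^ 2) * x ^ 2 / (2 * (1 - p * x) ^ 2)))
      ≤ (1 + x) ^ p * (1 - p * x) :=
  elementary_inequality_general x p hx0 hp hpx
end
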